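/- arXiv:2001.06906 — 4 statements merged into one kernel-verified Lean document; each statement's English description precedes it below -/
import Mathlib

section
/- Let I be an interval, let f : I → ℝ be a nonzero continuous P-class function that is monotone decreasing on I, and let λ < 0. Then for all x, y ∈ I with x < y such that (1−λ)x + λy ∈ I, one has f((1−λ)x + λy) ≥ f(x) − f(y). -/
open Set

lemma inv_one_sub_mem_Icc {l : ℝ} (hl : l ≤ 0) : (1 - l)⁻¹ ∈ Icc (0 : ℝ) 1 :=
  ⟨inv_nonneg.2 (by linarith), inv_le_one_of_one_le₀ (by linarith)⟩

lemma inv_one_sub_mul_add_eq {K : Type*} [Field K] {l : K} (hl : 1 - l ≠ 0) (x y : K) :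
    (1 - l)⁻¹ * ((1 - l) * x + l * y) + (1 - (1 - l)⁻¹) * y = x := by
  field_simp
  ring

theorem P_class_decreasing_lemma_general
    (I : Set ℝ)
    (f : ℝ → ℝ)
    (hf_P : ∀ x ∈ I, ∀ y ∈ I, ∀ l ∈ Set.Icc (0 : ℝ) 1,
      f (l * x + (1 - l) * y) ≤ f x + f y)
    (l : ℝ) (hl : l < 0) :
    ∀ x ∈ I, ∀ y ∈ I, x < y → (1 - l) * x + l * y ∈ I →
      f x - f y ≤ f ((1 - l) * x + l * y) := by
  intro x _ y hy _ hz
  have hP := hf_P _ hz y hy _ (inv_one_sub_mem_Icc hl.le)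
  rw [inv_one_sub_mul_add_eq (by linarith) x y] at hP
  linarith

/-- Lemma 2.3: if `f` is a nonzero continuous P-class function that is decreasing on an
interval `I` and `λ < 0`, then `f((1−λ)x + λy) ≥ f(x) − f(y)` for `x < y` in `I` with
`(1−λ)x + λy ∈ I`. -/
theorem P_class_decreasing_lemma
    (I : Set ℝ) (hI : I.OrdConnected)
    (f : ℝ → ℝ) (hf_cont : ContinuousOn f I)
    (hf_P : ∀ x ∈ I, ∀ y ∈ I, ∀ l ∈ Set.Icc (0 : ℝ) 1,
      f (l * x + (1 - l) * y) ≤ f x + f y)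
    (hf_ne : ∃ z ∈ I, f z ≠ 0)
    (hf_dec : AntitoneOn f I)
    (l : ℝ) (hl : l < 0) :
    ∀ x ∈ I, ∀ y ∈ I, x < y → (1 - l) * x + l * y ∈ I →
      f x - f y ≤ f ((1 - l) * x + l * y) :=
  P_class_decreasing_lemma_general I f hf_P l hl
end

section
/- Let m < M be real numbers, let f : [m, M] → ℝ be a continuous monotone decreasing P-class function, and let C be a bounded self-adjoint operator on a complex Hilbert space H with mI ≤ C ≤ MI. Let x ∈ H and u ∈ ℝ satisfy 0 < ⟨x, x⟩ < u, let a ∈ [m, M] satisfy a ≤ ⟨Cx, x⟩ / ⟨x, x⟩, and suppose (ua − ⟨Cx, x⟩)/(u − ⟨x, x⟩) ∈ [m, M]. Then f((ua − ⟨Cx, x⟩)/(u − ⟨x, x⟩)) ≥ f(a) − 2⟨f(C)x, x⟩ / ⟨x, x⟩. -/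
open scoped InnerProductSpace
open Set

/-!
Since `a ≤ ⟨Cx, x⟩ / ⟨x, x⟩` and `u > ⟨x, x⟩`, the point `(ua − ⟨Cx, x⟩)/(u − ⟨x, x⟩)` lies to the
left of `a`, so `f` being decreasing already gives `f a ≤ f ((ua − ⟨Cx, x⟩)/(u − ⟨x, x⟩))`. The
subtracted term is nonnegative: taking `λ = 1` in the P-class inequality gives `f ≤ 2 f`, so
`f ≥ 0` on `[m, M] ⊇ σ(C)`, hence `f(C) ≥ 0`.
-/

def PClassOn (f : ℝ → ℝ) (s : Set ℝ) : Prop :=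
  ∀ x ∈ s, ∀ y ∈ s, ∀ l ∈ Icc (0 : ℝ) 1, f (l * x + (1 - l) * y) ≤ f x + f y

lemma PClassOn.nonneg {f : ℝ → ℝ} {s : Set ℝ} (hf : PClassOn f s) {x : ℝ} (hx : x ∈ s) :
    0 ≤ f x := by
  have h := hf x hx x hx 1 ⟨zero_le_one, le_rfl⟩
  simp only [one_mul, sub_self, zero_mul, add_zero] at h
  linarith

lemma IsSelfAdjoint.spectrum_subset_Icc {A : Type*} [CStarAlgebra A] [PartialOrder A]
    [StarOrderedRing A] {a : A} (ha : IsSelfAdjoint a) {m M : ℝ}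
    (hm : algebraMap ℝ A m ≤ a) (hM : a ≤ algebraMap ℝ A M) : spectrum ℝ a ⊆ Icc m M :=
  fun t ht ↦ ⟨(algebraMap_le_iff_le_spectrum ha).mp hm t ht,
    (le_algebraMap_iff_spectrum_le ha).mp hM t ht⟩

lemma re_inner_cfc_apply_self_nonneg {H : Type*} [NormedAddCommGroup H] [InnerProductSpace ℂ H]
    [CompleteSpace H] {f : ℝ → ℝ} {C : H →L[ℂ] H} (hf : ∀ t ∈ spectrum ℝ C, 0 ≤ f t) (x : H) :
    0 ≤ (⟪cfc f C x, x⟫_ℂ).re :=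
  ((ContinuousLinearMap.nonneg_iff_isPositive _).mp (cfc_nonneg hf)).re_inner_nonneg_left x

lemma mul_sub_div_sub_le {p u a c : ℝ} (hp : 0 < p) (hpu : p < u) (ha : a ≤ c / p) :
    (u * a - c) / (u - p) ≤ a := by
  rw [div_le_iff₀ (sub_pos.mpr hpu)]
  nlinarith [(le_div_iff₀ hp).mp ha]

theorem P_class_decreasing_operator_ineq_general
    {H : Type*} [NormedAddCommGroup H] [InnerProductSpace ℂ H] [CompleteSpace H]
    (m M : ℝ)
    (f : ℝ → ℝ)
    (hf_P : ∀ x ∈ Set.Icc m M, ∀ y ∈ Set.Icc m M, ∀ l ∈ Set.Icc (0 : ℝ) 1,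
      f (l * x + (1 - l) * y) ≤ f x + f y)
    (hf_dec : AntitoneOn f (Set.Icc m M))
    (C : H →L[ℂ] H) (hC : IsSelfAdjoint C)
    (hCm : algebraMap ℝ (H →L[ℂ] H) m ≤ C)
    (hCM : C ≤ algebraMap ℝ (H →L[ℂ] H) M)
    (x : H) (u : ℝ) (hx : 0 < (⟪x, x⟫_ℂ).re) (hxu : (⟪x, x⟫_ℂ).re < u)
    (a : ℝ) (ha : a ∈ Set.Icc m M)
    (ha' : a ≤ (⟪C x, x⟫_ℂ).re / (⟪x, x⟫_ℂ).re)
    (hmem : (u * a - (⟪C x, x⟫_ℂ).re) / (u - (⟪x, x⟫_ℂ).re) ∈ Set.Icc m M) :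
    f a - 2 * (⟪(cfc f C) x, x⟫_ℂ).re / (⟪x, x⟫_ℂ).re ≤
      f ((u * a - (⟪C x, x⟫_ℂ).re) / (u - (⟪x, x⟫_ℂ).re)) := by
  have hf_mono : f a ≤ f ((u * a - (⟪C x, x⟫_ℂ).re) / (u - (⟪x, x⟫_ℂ).re)) :=
    hf_dec hmem ha (mul_sub_div_sub_le hx hxu ha')
  have hfC : 0 ≤ (⟪cfc f C x, x⟫_ℂ).re :=
    re_inner_cfc_apply_self_nonneg
      (fun t ht ↦ PClassOn.nonneg hf_P (hC.spectrum_subset_Icc hCm hCM ht)) x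
  have : 0 ≤ 2 * (⟪cfc f C x, x⟫_ℂ).re / (⟪x, x⟫_ℂ).re := by positivity
  linarith

/-- Theorem 2.5: for a continuous decreasing P-class function `f` on `[m, M]` and a
self-adjoint operator `C` with `mI ≤ C ≤ MI`, if `0 < ⟨x, x⟩ < u`, `a ∈ [m, M]` with
`a ≤ ⟨Cx, x⟩/⟨x, x⟩` and `(ua − ⟨Cx, x⟩)/(u − ⟨x, x⟩) ∈ [m, M]`, then
`f((ua − ⟨Cx, x⟩)/(u − ⟨x, x⟩)) ≥ f(a) − 2⟨f(C)x, x⟩/⟨x, x⟩`. -/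
theorem P_class_decreasing_operator_ineq
    {H : Type*} [NormedAddCommGroup H] [InnerProductSpace ℂ H] [CompleteSpace H]
    (m M : ℝ) (hmM : m < M)
    (f : ℝ → ℝ) (hf_cont : ContinuousOn f (Set.Icc m M))
    (hf_P : ∀ x ∈ Set.Icc m M, ∀ y ∈ Set.Icc m M, ∀ l ∈ Set.Icc (0 : ℝ) 1,
      f (l * x + (1 - l) * y) ≤ f x + f y)
    (hf_dec : AntitoneOn f (Set.Icc m M))
    (C : H →L[ℂ] H) (hC : IsSelfAdjoint C)
    (hCm : algebraMap ℝ (H →L[ℂ] H) m ≤ C)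
    (hCM : C ≤ algebraMap ℝ (H →L[ℂ] H) M)
    (x : H) (u : ℝ) (hx : 0 < (⟪x, x⟫_ℂ).re) (hxu : (⟪x, x⟫_ℂ).re < u)
    (a : ℝ) (ha : a ∈ Set.Icc m M)
    (ha' : a ≤ (⟪C x, x⟫_ℂ).re / (⟪x, x⟫_ℂ).re)
    (hmem : (u * a - (⟪C x, x⟫_ℂ).re) / (u - (⟪x, x⟫_ℂ).re) ∈ Set.Icc m M) :
    f a - 2 * (⟪(cfc f C) x, x⟫_ℂ).re / (⟪x, x⟫_ℂ).re ≤
      f ((u * a - (⟪C x, x⟫_ℂ).re) / (u - (⟪x, x⟫_ℂ).re)) :=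
  P_class_decreasing_operator_ineq_general m M f hf_P hf_dec C hC hCm hCM x u hx hxu a ha ha' hmem
end

section
/- Let m < M be real numbers, let C be a bounded self-adjoint operator on a complex Hilbert space H whose spectrum is contained in [m, M], and let f : [m, M] → ℝ be a continuous P-class function. Then for every x ∈ H with ‖x‖ = 1, one has ⟨f(C)x, x⟩ ≤ f(m) + f(M). -/
open scoped InnerProductSpace
open Set

/-!
Every point of `[m, M]` is a convex combination of `m` and `M`, so the P-class inequality bounds
`f` by `f m + f M` on the whole interval, in particular on the spectrum of `C`. Monotonicity of the
functional calculus turns this into the Loewner inequality `f(C) ≤ (f m + f M) • 1`, and testing it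
against a unit vector gives the claim.
-/

lemma le_add_of_P_class {f : ℝ → ℝ} {a b : ℝ}
    (hf : ∀ x ∈ Icc a b, ∀ y ∈ Icc a b, ∀ l ∈ Icc (0 : ℝ) 1,
      f (l * x + (1 - l) * y) ≤ f x + f y)
    {t : ℝ} (ht : t ∈ Icc a b) : f t ≤ f a + f b := by
  have hab : a ≤ b := ht.1.trans ht.2
  rw [← segment_eq_Icc hab] at ht
  obtain ⟨u, v, hu, hv, huv, rfl⟩ := ht
  obtain rfl : v = 1 - u := by linarith
  exact hf a (left_mem_Icc.2 hab) b (right_mem_Icc.2 hab) u ⟨hu, by linarith⟩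

lemma ContinuousLinearMap.re_inner_le_of_le_algebraMap {E : Type*}
    [NormedAddCommGroup E] [InnerProductSpace ℂ E] {T : E →L[ℂ] E} {r : ℝ}
    (h : T ≤ algebraMap ℝ (E →L[ℂ] E) r) (x : E) :
    RCLike.re ⟪T x, x⟫_ℂ ≤ r * ‖x‖ ^ 2 := by
  have := ((ContinuousLinearMap.le_def _ _).1 h).re_inner_nonneg_left x
  rw [sub_apply, algebraMap_apply, inner_sub_left, map_sub, RCLike.real_smul_eq_coe_smul (K := ℂ),
    inner_smul_left, RCLike.conj_ofReal, RCLike.re_ofReal_mul, inner_self_eq_norm_sq] at this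
  linarith

theorem P_class_upper_bound_general
    {H : Type*} [NormedAddCommGroup H] [InnerProductSpace ℂ H] [CompleteSpace H]
    (m M : ℝ)
    (C : H →L[ℂ] H) (hC : IsSelfAdjoint C)
    (hspec : spectrum ℝ C ⊆ Set.Icc m M)
    (f : ℝ → ℝ) (hf_cont : ContinuousOn f (Set.Icc m M))
    (hf_P : ∀ x ∈ Set.Icc m M, ∀ y ∈ Set.Icc m M, ∀ l ∈ Set.Icc (0 : ℝ) 1,
      f (l * x + (1 - l) * y) ≤ f x + f y)
    (x : H) (hx : ‖x‖ = 1) :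
    (⟪(cfc f C) x, x⟫_ℂ).re ≤ f m + f M := by
  have hbound : cfc f C ≤ algebraMap ℝ (H →L[ℂ] H) (f m + f M) :=
    cfc_le_algebraMap f _ C (fun t ht ↦ le_add_of_P_class hf_P (hspec ht)) (hf_cont.mono hspec)
  simpa [hx] using ContinuousLinearMap.re_inner_le_of_le_algebraMap hbound x

/-- Theorem 2.7: for a bounded self-adjoint operator `C` with spectrum in `[m, M]` and a
continuous P-class function `f` on `[m, M]`, every unit vector `x` satisfies
`⟨f(C)x, x⟩ ≤ f(m) + f(M)`. -/
theorem P_class_upper_bound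
    {H : Type*} [NormedAddCommGroup H] [InnerProductSpace ℂ H] [CompleteSpace H]
    (m M : ℝ) (hmM : m < M)
    (C : H →L[ℂ] H) (hC : IsSelfAdjoint C)
    (hspec : spectrum ℝ C ⊆ Set.Icc m M)
    (f : ℝ → ℝ) (hf_cont : ContinuousOn f (Set.Icc m M))
    (hf_P : ∀ x ∈ Set.Icc m M, ∀ y ∈ Set.Icc m M, ∀ l ∈ Set.Icc (0 : ℝ) 1,
      f (l * x + (1 - l) * y) ≤ f x + f y)
    (x : H) (hx : ‖x‖ = 1) :
    (⟪(cfc f C) x, x⟫_ℂ).re ≤ f m + f M :=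
  P_class_upper_bound_general m M C hC hspec f hf_cont hf_P x hx
end

section
/- Let m < M be real numbers, let C be a bounded self-adjoint operator on a complex Hilbert space H whose spectrum is contained in [m, M], and let f : [m, M] → ℝ be a continuous P-class function. Then for every x ∈ H with ‖x‖ = 1, one has 2⟨f(C)x, x⟩ − f(⟨Cx, x⟩) ≤ 2(f(m) + f(M)) − (min over t ∈ [m, M] of f(t)). -/
/-! Since `t ∈ [m, M]` is a convex combination of `m` and `M`, the P-class inequality gives
`f ≤ f m + f M` on `[m, M]`, hence `f(C) ≤ f m + f M` and `⟨f(C)x, x⟩ ≤ f m + f M`. On the other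
hand `⟨Cx, x⟩ ∈ [m, M]`, so `f ⟨Cx, x⟩` is at least the minimum of `f`. -/

open scoped InnerProductSpace

open Set

def IsPClassOn (f : ℝ → ℝ) (s : Set ℝ) : Prop :=
  ∀ x ∈ s, ∀ y ∈ s, ∀ l ∈ Icc (0 : ℝ) 1, f (l * x + (1 - l) * y) ≤ f x + f y

theorem IsPClassOn.le_add_of_mem_Icc {f : ℝ → ℝ} {a b t : ℝ} (hf : IsPClassOn f (Icc a b))
    (ht : t ∈ Icc a b) : f t ≤ f a + f b := by
  have hab : a ≤ b := ht.1.trans ht.2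
  rw [← segment_eq_Icc hab] at ht
  obtain ⟨l, l', hl, hl', hsum, rfl⟩ := ht
  obtain rfl : l' = 1 - l := by linarith
  simpa using hf a (left_mem_Icc.2 hab) b (right_mem_Icc.2 hab) l ⟨hl, by linarith⟩

namespace ContinuousLinearMap

variable {H : Type*} [NormedAddCommGroup H] [InnerProductSpace ℂ H]

theorem re_inner_le_re_inner_of_le {A B : H →L[ℂ] H} (h : A ≤ B) (x : H) :
    (⟪A x, x⟫_ℂ).re ≤ (⟪B x, x⟫_ℂ).re := by
  simpa [inner_sub_left] using ((le_def A B).mp h).re_inner_nonneg_left x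

theorem re_inner_algebraMap_apply_self (r : ℝ) {x : H} (hx : ‖x‖ = 1) :
    (⟪algebraMap ℝ (H →L[ℂ] H) r x, x⟫_ℂ).re = r := by
  simp [Algebra.algebraMap_eq_smul_one, hx]

theorem re_inner_le_of_le_algebraMap_s10 {A : H →L[ℂ] H} {r : ℝ}
    (h : A ≤ algebraMap ℝ (H →L[ℂ] H) r) {x : H} (hx : ‖x‖ = 1) : (⟪A x, x⟫_ℂ).re ≤ r :=
  re_inner_algebraMap_apply_self r hx ▸ re_inner_le_re_inner_of_le h x

theorem le_re_inner_of_algebraMap_le {A : H →L[ℂ] H} {r : ℝ}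
    (h : algebraMap ℝ (H →L[ℂ] H) r ≤ A) {x : H} (hx : ‖x‖ = 1) : r ≤ (⟪A x, x⟫_ℂ).re :=
  re_inner_algebraMap_apply_self r hx ▸ re_inner_le_re_inner_of_le h x

variable [CompleteSpace H]

theorem re_inner_mem_Icc_of_spectrum_subset {A : H →L[ℂ] H} (hA : IsSelfAdjoint A) {a b : ℝ}
    (hspec : spectrum ℝ A ⊆ Icc a b) {x : H} (hx : ‖x‖ = 1) : (⟪A x, x⟫_ℂ).re ∈ Icc a b :=
  ⟨le_re_inner_of_algebraMap_le (algebraMap_le_of_le_spectrum (fun _ ht ↦ (hspec ht).1) hA) hx,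
    re_inner_le_of_le_algebraMap_s10 (le_algebraMap_of_spectrum_le (fun _ ht ↦ (hspec ht).2) hA) hx⟩

end ContinuousLinearMap

theorem P_class_difference_bound_general
    {H : Type*} [NormedAddCommGroup H] [InnerProductSpace ℂ H] [CompleteSpace H]
    (m M : ℝ)
    (C : H →L[ℂ] H) (hC : IsSelfAdjoint C)
    (hspec : spectrum ℝ C ⊆ Set.Icc m M)
    (f : ℝ → ℝ) (hf_cont : ContinuousOn f (Set.Icc m M))
    (hf_P : ∀ x ∈ Set.Icc m M, ∀ y ∈ Set.Icc m M, ∀ l ∈ Set.Icc (0 : ℝ) 1,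
      f (l * x + (1 - l) * y) ≤ f x + f y)
    (x : H) (hx : ‖x‖ = 1) :
    2 * (⟪(cfc f C) x, x⟫_ℂ).re - f (⟪C x, x⟫_ℂ).re ≤
      2 * (f m + f M) - sInf (f '' Set.Icc m M) := by
  have hf_bound : ∀ t ∈ spectrum ℝ C, f t ≤ f m + f M :=
    fun t ht ↦ IsPClassOn.le_add_of_mem_Icc hf_P (hspec ht)
  have hfC : (⟪cfc f C x, x⟫_ℂ).re ≤ f m + f M :=
    ContinuousLinearMap.re_inner_le_of_le_algebraMap_s10
      (cfc_le_algebraMap f _ C hf_bound (hf_cont.mono hspec) hC) hx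
  have hmin : sInf (f '' Icc m M) ≤ f (⟪C x, x⟫_ℂ).re :=
    csInf_le (isCompact_Icc.image_of_continuousOn hf_cont).bddBelow
      (mem_image_of_mem f (ContinuousLinearMap.re_inner_mem_Icc_of_spectrum_subset hC hspec hx))
  linarith

/-- Corollary 2.10(ii): for `C` self-adjoint with spectrum in `[m, M]` and `f` a
continuous P-class function on `[m, M]`, every unit vector `x` satisfies
`2⟨f(C)x, x⟩ − f(⟨Cx, x⟩) ≤ 2(f(m) + f(M)) − min_{t ∈ [m, M]} f(t)`. -/
theorem P_class_difference_bound
    {H : Type*} [NormedAddCommGroup H] [InnerProductSpace ℂ H] [CompleteSpace H]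
    (m M : ℝ) (hmM : m < M)
    (C : H →L[ℂ] H) (hC : IsSelfAdjoint C)
    (hspec : spectrum ℝ C ⊆ Set.Icc m M)
    (f : ℝ → ℝ) (hf_cont : ContinuousOn f (Set.Icc m M))
    (hf_P : ∀ x ∈ Set.Icc m M, ∀ y ∈ Set.Icc m M, ∀ l ∈ Set.Icc (0 : ℝ) 1,
      f (l * x + (1 - l) * y) ≤ f x + f y)
    (x : H) (hx : ‖x‖ = 1) :
    2 * (⟪(cfc f C) x, x⟫_ℂ).re - f (⟪C x, x⟫_ℂ).re ≤
      2 * (f m + f M) - sInf (f '' Set.Icc m M) :=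
  P_class_difference_bound_general m M C hC hspec f hf_cont hf_P x hx
end
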